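/- Let G be a bipartite simple graph with maximum degree Δ(G) ≥ 1. Let φ be a partial proper edge coloring of the Cartesian product G □ K₂ defined on a set E₀ of edges using at most Δ(G) + 1 colors, such that any two distinct edges of E₀ are at distance at least 3 in G □ K₂. Then φ extends to a proper edge coloring of G □ K₂ using Δ(G) + 1 colors. -/

import Mathlib

open SimpleGraph
open scoped Classical

/-- A (total) edge coloring `c` with `n` colors is proper on the edge set `E₀ ⊆ G.edgeSet`:
any two distinct edges of `E₀` sharing a vertex receive different colors. -/
def IsProperEdgeColoringOn {V : Type*} (G : SimpleGraph V) (E₀ : Set (Sym2 V)) {n : ℕ}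
    (c : Sym2 V → Fin n) : Prop :=
  E₀ ⊆ G.edgeSet ∧
    ∀ e ∈ E₀, ∀ f ∈ E₀, e ≠ f → (∃ v, v ∈ e ∧ v ∈ f) → c e ≠ c f

/-- A proper edge coloring of `G` with `n` colors: any two distinct edges of `G`
sharing a vertex receive different colors. -/
def IsProperEdgeColoring {V : Type*} (G : SimpleGraph V) {n : ℕ} (c : Sym2 V → Fin n) : Prop :=
  ∀ e ∈ G.edgeSet, ∀ f ∈ G.edgeSet, e ≠ f → (∃ v, v ∈ e ∧ v ∈ f) → c e ≠ c f

/-- The distance between edges `e` and `f` of `G` is at least `k`: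
every endpoint of `e` is at (extended) graph distance at least `k` from every endpoint of `f`. -/
def EdgeDistGE {V : Type*} (G : SimpleGraph V) (e f : Sym2 V) (k : ℕ) : Prop :=
  ∀ x ∈ e, ∀ y ∈ f, (k : ℕ∞) ≤ G.edist x y

/-- The chromatic index of `G`: the least `n` such that `G` admits a proper edge coloring
with `n` colors. -/
noncomputable def chromIndex {V : Type*} (G : SimpleGraph V) : ℕ :=
  sInf {n | ∃ c : Sym2 V → Fin n, IsProperEdgeColoring G c}

/-- A finite graph is Class 1 if its chromatic index equals its maximum degree. -/
def IsClassOne {V : Type*} [Fintype V] (G : SimpleGraph V) : Prop :=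
  chromIndex G = G.maxDegree

/-- The iterated Cartesian (box) product of the family of graphs `G i`. -/
def boxProdPi {ι : Type*} {V : ι → Type*} (G : ∀ i, SimpleGraph (V i)) :
    SimpleGraph (∀ i, V i) where
  Adj x y := ∃ i, (G i).Adj (x i) (y i) ∧ ∀ j, j ≠ i → x j = y j
  symm := ⟨fun x y ⟨i, ha, he⟩ => ⟨i, ha.symm, fun j hj => (he j hj).symm⟩⟩
  loopless := ⟨fun x ⟨i, ha, _⟩ => (G i).irrefl ha⟩

/-- The `d`-fold iterated Cartesian (box) product of `G` with itself. -/
def boxPow {V : Type*} (G : SimpleGraph V) (d : ℕ) : SimpleGraph (Fin d → V) :=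
  boxProdPi fun _ => G

/-!
Project the precoloured edges to `G`. A precoloured copy of an edge `g` of `G` fixes the colour
of `g`; any other precoloured edge with an endpoint over a vertex of `g` forbids its colour on
`g`. Two vertices of `G □ K₂` lying over the same edge of `G` are at distance at most 2, so each
edge of `G` is touched by at most one precoloured edge. Hence the remaining edges of `G` have
lists of at least `Δ` of the `Δ + 1` colours, and Galvin's theorem (a bipartite graph is
`Δ`-edge-choosable: orient its line graph by a König colouring, and find kernels as stable
matchings) colours them from these lists. Both copies of `G` get this colouring, and each edge
`(z, 0)(z, 1)` keeps its precolour or takes a colour missing at `z`.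
-/

open Finset

namespace Bipartite

variable {β γ κ : Type*}

def IsProperOn (E : Finset (β × γ)) (c : β × γ → κ) : Prop :=
  ∀ e ∈ E, ∀ f ∈ E, e ≠ f → e.1 = f.1 ∨ e.2 = f.2 → c e ≠ c f

def IsMatching (K : Finset (β × γ)) : Prop :=
  ∀ e ∈ K, ∀ f ∈ K, e ≠ f → e.1 ≠ f.1 ∧ e.2 ≠ f.2

lemma IsProperOn.mono {E E' : Finset (β × γ)} {c : β × γ → κ} (hc : IsProperOn E c)
    (h : E' ⊆ E) : IsProperOn E' c :=
  fun e he f hf => hc e (h he) f (h hf)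

lemma IsProperOn.update_insert {E : Finset (β × γ)} {c : β × γ → κ} {e₀ : β × γ} {a : κ}
    (hc : IsProperOn E c) (he₀ : e₀ ∉ E)
    (ha : ∀ f ∈ E, f.1 = e₀.1 ∨ f.2 = e₀.2 → c f ≠ a) :
    IsProperOn (insert e₀ E) (Function.update c e₀ a) := by
  have hne : ∀ f ∈ E, f ≠ e₀ := fun f hf h => he₀ (h ▸ hf)
  intro e he f hf hef hmeet
  rcases mem_insert.1 he with rfl | heE <;> rcases mem_insert.1 hf with rfl | hfE
  · exact absurd rfl hef
  · rw [Function.update_self, Function.update_of_ne (hne f hfE)]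
    exact (ha f hfE (hmeet.imp Eq.symm Eq.symm)).symm
  · rw [Function.update_self, Function.update_of_ne (hne e heE)]
    exact ha e heE hmeet
  · rw [Function.update_of_ne (hne e heE), Function.update_of_ne (hne f hfE)]
    exact hc e heE f hfE hef hmeet

lemma IsProperOn.swap_on [DecidableEq κ] {E : Finset (β × γ)} {c : β × γ → κ} {a b : κ}
    {S : Set (β × γ)} (hc : IsProperOn E c)
    (hS : ∀ e ∈ S, ∀ f ∈ E, e ≠ f → e.1 = f.1 ∨ e.2 = f.2 → c f = a ∨ c f = b → f ∈ S) :
    IsProperOn E fun e => if e ∈ S then Equiv.swap a b (c e) else c e := by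
  have mixed : ∀ e ∈ E, ∀ f ∈ E, e ≠ f → e.1 = f.1 ∨ e.2 = f.2 → e ∈ S → f ∉ S →
      Equiv.swap a b (c e) ≠ c f := by
    intro e he f hf hef hmeet heS hfS
    have hfa : c f ≠ a := fun h => hfS (hS e heS f hf hef hmeet (Or.inl h))
    have hfb : c f ≠ b := fun h => hfS (hS e heS f hf hef hmeet (Or.inr h))
    rw [← Equiv.swap_apply_of_ne_of_ne hfa hfb, (Equiv.swap a b).injective.ne_iff]
    exact hc e he f hf hef hmeet
  intro e he f hf hef hmeet
  by_cases heS : e ∈ S <;> by_cases hfS : f ∈ S <;> simp only [heS, hfS, if_true, if_false]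
  · exact (Equiv.swap a b).injective.ne (hc e he f hf hef hmeet)
  · exact mixed e he f hf hef hmeet heS hfS
  · exact (mixed f hf e he hef.symm (hmeet.imp Eq.symm Eq.symm) hfS heS).symm
  · exact hc e he f hf hef hmeet

section Kempe

variable {E : Finset (β × γ)} {c : β × γ → κ} {a b : κ} {e₀ : β × γ}

def KempeStep (E : Finset (β × γ)) (c : β × γ → κ) (a b : κ) (e f : β × γ) : Prop :=
  f ∈ E ∧ (c e = a ∧ c f = b ∧ e.1 = f.1 ∨ c e = b ∧ c f = a ∧ e.2 = f.2)

def kempeChain (E : Finset (β × γ)) (c : β × γ → κ) (a b : κ) (e₀ : β × γ) : Set (β × γ) :=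
  {f | Relation.ReflTransGen (KempeStep E c a b) e₀ f}

lemma mem_kempeChain_self : e₀ ∈ kempeChain E c a b e₀ := Relation.ReflTransGen.refl

lemma mem_and_color_of_mem_kempeChain (he₀ : e₀ ∈ E) (ha : c e₀ = a) {f : β × γ}
    (hf : f ∈ kempeChain E c a b e₀) : f ∈ E ∧ (c f = a ∨ c f = b) := by
  induction hf with
  | refl => exact ⟨he₀, Or.inl ha⟩
  | tail _ hstep _ =>
    obtain ⟨hg, ⟨-, hgb, -⟩ | ⟨-, hga, -⟩⟩ := hstep
    · exact ⟨hg, Or.inr hgb⟩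
    · exact ⟨hg, Or.inl hga⟩

lemma eq_or_exists_kempeStep_of_mem_kempeChain {f : β × γ} (hf : f ∈ kempeChain E c a b e₀) :
    f = e₀ ∨ ∃ g ∈ kempeChain E c a b e₀, KempeStep E c a b g f :=
  Relation.ReflTransGen.cases_tail hf

/-- The chain cannot branch: an edge other than `e₀` was entered through the only edge of the
other colour at one of its endpoints, and there is no `b`-edge at the `γ`-end of `e₀`. -/
lemma kempeChain_closed (hc : IsProperOn E c) (he₀ : e₀ ∈ E) (ha : c e₀ = a)
    (hb : ∀ f ∈ E, f.2 = e₀.2 → c f ≠ b) :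
    ∀ e ∈ kempeChain E c a b e₀, ∀ f ∈ E, e ≠ f → e.1 = f.1 ∨ e.2 = f.2 →
      c f = a ∨ c f = b → f ∈ kempeChain E c a b e₀ := by
  have hab : a ≠ b := fun h => hb e₀ he₀ rfl (ha.trans h)
  intro e he f hf hef hmeet hfab
  obtain ⟨heE, heab⟩ := mem_and_color_of_mem_kempeChain he₀ ha he
  have hcef : c e ≠ c f := hc e heE f hf hef hmeet
  have unique : ∀ g ∈ kempeChain E c a b e₀, g.1 = f.1 ∨ g.2 = f.2 → c g = c f →
      f ∈ kempeChain E c a b e₀ :=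
    fun g hg hgf hcg => by
      by_contra hfS
      exact hc g (mem_and_color_of_mem_kempeChain he₀ ha hg).1 f hf
        (fun h => hfS (h ▸ hg)) hgf hcg
  rcases heab with hea | heb
  · have hfb : c f = b := hfab.resolve_left (hea ▸ hcef.symm)
    rcases hmeet with h1 | h2
    · exact Relation.ReflTransGen.tail he ⟨hf, Or.inl ⟨hea, hfb, h1⟩⟩
    · rcases eq_or_exists_kempeStep_of_mem_kempeChain he with rfl | ⟨g, hg, -, hstep⟩
      · exact absurd hfb (hb f hf h2.symm)
      · rcases hstep with ⟨-, heb, -⟩ | ⟨hgb, -, hge⟩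
        · exact absurd (hea.symm.trans heb) hab
        · exact unique g hg (Or.inr (hge.trans h2)) (hgb.trans hfb.symm)
  · have hfa : c f = a := hfab.resolve_right (heb ▸ hcef.symm)
    rcases hmeet with h1 | h2
    · rcases eq_or_exists_kempeStep_of_mem_kempeChain he with rfl | ⟨g, hg, -, hstep⟩
      · exact absurd (ha.symm.trans heb) hab
      · rcases hstep with ⟨hga, -, hge⟩ | ⟨-, hea, -⟩
        · exact unique g hg (Or.inl (hge.trans h1)) (hga.trans hfa.symm)
        · exact absurd (heb.symm.trans hea) hab.symm
    · exact Relation.ReflTransGen.tail he ⟨hf, Or.inr ⟨heb, hfa, h2⟩⟩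

end Kempe

lemma exists_lt_forall_ne {s : Finset (β × γ)} {c : β × γ → ℕ} {n : ℕ} (hs : #s < n) :
    ∃ a < n, ∀ f ∈ s, c f ≠ a := by
  obtain ⟨a, ha, has⟩ := exists_mem_notMem_of_card_lt_card
    ((card_image_le (s := s) (f := c)).trans_lt (hs.trans_eq (card_range n).symm))
  exact ⟨a, mem_range.1 ha, fun f hf hfa => has (mem_image.2 ⟨f, hf, hfa⟩)⟩

/-- Swap `a` and `b` on the Kempe chain starting at the `a`-edge at `v`: the chain enters
`β`-vertices only through `a`-edges, so it avoids `u`. -/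
lemma IsProperOn.exists_missing_at_both {E : Finset (β × γ)} {c : β × γ → ℕ} {n a b : ℕ}
    {u : β} {v : γ} (hc : IsProperOn E c) (hlt : ∀ e ∈ E, c e < n) (ha : a < n) (hb : b < n)
    (hau : ∀ f ∈ E, f.1 = u → c f ≠ a) (hbv : ∀ f ∈ E, f.2 = v → c f ≠ b) :
    ∃ c' : β × γ → ℕ, IsProperOn E c' ∧ (∀ e ∈ E, c' e < n) ∧
      ∀ f ∈ E, f.1 = u ∨ f.2 = v → c' f ≠ a := by
  by_cases hav : ∀ f ∈ E, f.2 = v → c f ≠ a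
  · exact ⟨c, hc, hlt, fun f hf huv => huv.elim (hau f hf) (hav f hf)⟩
  push Not at hav
  obtain ⟨e₀, he₀, rfl, hae₀⟩ := hav
  have hab : a ≠ b := fun h => hbv e₀ he₀ rfl (hae₀.trans h)
  set S := kempeChain E c a b e₀
  refine ⟨fun e => if e ∈ S then Equiv.swap a b (c e) else c e,
    hc.swap_on (kempeChain_closed hc he₀ hae₀ hbv), fun e he => ?_, fun f hf hfuv hfa => ?_⟩
  · dsimp only
    split_ifs
    · rw [Equiv.swap_apply_def]
      split_ifs <;> first | exact hb | exact ha | exact hlt e he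
    · exact hlt e he
  by_cases hfS : f ∈ S
  · have hfb : c f = b := by
      simpa only [hfS, if_true, Equiv.swap_apply_eq_iff, Equiv.swap_apply_left] using hfa
    rcases hfuv with hu | hv
    · rcases eq_or_exists_kempeStep_of_mem_kempeChain hfS with rfl | ⟨g, hg, -, hstep⟩
      · exact hbv f hf rfl hfb
      · rcases hstep with ⟨hga, -, hgf⟩ | ⟨-, hfa', -⟩
        · exact hau g (mem_and_color_of_mem_kempeChain he₀ hae₀ hg).1 (hgf.trans hu) hga
        · exact hab (hfa'.symm.trans hfb)
    · exact hbv f hf hv hfb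
  · simp only [hfS, if_false] at hfa
    rcases hfuv with hu | hv
    · exact hau f hf hu hfa
    · have : f = e₀ := by
        by_contra hne
        exact hc f hf e₀ he₀ hne (Or.inr hv) (hfa.trans hae₀.symm)
      exact hfS (this ▸ mem_kempeChain_self)

/-- König's edge colouring theorem. -/
theorem exists_proper_coloring (n : ℕ) (E : Finset (β × γ))
    (h₁ : ∀ x, #(E.filter (·.1 = x)) ≤ n) (h₂ : ∀ y, #(E.filter (·.2 = y)) ≤ n) :
    ∃ c : β × γ → ℕ, (∀ e ∈ E, c e < n) ∧ IsProperOn E c := by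
  induction E using Finset.induction_on with
  | empty => exact ⟨fun _ => 0, by simp, by simp [IsProperOn]⟩
  | insert e₀ E he₀ ih =>
    have card_lt : ∀ (p : β × γ → Prop) [DecidablePred p], p e₀ →
        #((insert e₀ E).filter p) ≤ n → #(E.filter p) < n := fun p _ hp h => by
      rwa [filter_insert, if_pos hp, card_insert_of_notMem (fun h => he₀ (mem_filter.1 h).1),
        Nat.add_one_le_iff] at h
    have sub : ∀ (p : β × γ → Prop) [DecidablePred p], #(E.filter p) ≤ #((insert e₀ E).filter p) :=
      fun p _ => card_le_card (filter_subset_filter p (subset_insert e₀ E))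
    obtain ⟨c, hlt, hc⟩ := ih (fun x => (sub _).trans (h₁ x)) (fun y => (sub _).trans (h₂ y))
    obtain ⟨a, ha, hau⟩ := exists_lt_forall_ne (c := c) (card_lt (·.1 = e₀.1) rfl (h₁ e₀.1))
    obtain ⟨b, hb, hbv⟩ := exists_lt_forall_ne (c := c) (card_lt (·.2 = e₀.2) rfl (h₂ e₀.2))
    obtain ⟨c', hc', hlt', hmiss⟩ := hc.exists_missing_at_both hlt ha hb
      (fun f hf hfu => hau f (mem_filter.2 ⟨hf, hfu⟩))
      (fun f hf hfv => hbv f (mem_filter.2 ⟨hf, hfv⟩))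
    refine ⟨Function.update c' e₀ a, fun e he => ?_, hc'.update_insert he₀ hmiss⟩
    rcases eq_or_ne e e₀ with rfl | hne
    · rwa [Function.update_self]
    · rw [Function.update_of_ne hne]
      exact hlt' e ((mem_insert.1 he).resolve_left hne)

section StableMatching

variable (c₀ : β × γ → ℕ)

/-- The arcs `e → f` of Galvin's orientation of the line graph. -/
def Absorbs (f e : β × γ) : Prop :=
  f.1 = e.1 ∧ c₀ e < c₀ f ∨ f.2 = e.2 ∧ c₀ f < c₀ e

/-- A kernel of Galvin's orientation restricted to `U`. -/
def IsStableMatching (U K : Finset (β × γ)) : Prop :=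
  K ⊆ U ∧ IsMatching K ∧ ∀ e ∈ U, e ∉ K → ∃ f ∈ K, Absorbs c₀ f e

/-- One round of the Gale–Shapley algorithm: each `β`-vertex proposes along its edges of largest
`c₀`, and each `γ`-vertex keeps only its proposals of smallest `c₀`. -/
noncomputable def proposals (U : Finset (β × γ)) : Finset (β × γ) :=
  U.filter fun e => ∀ f ∈ U, f.1 = e.1 → c₀ f ≤ c₀ e

noncomputable def accepted (U : Finset (β × γ)) : Finset (β × γ) :=
  (proposals c₀ U).filter fun e => ∀ f ∈ proposals c₀ U, f.2 = e.2 → c₀ e ≤ c₀ f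

variable {c₀}

lemma accepted_subset_proposals {U : Finset (β × γ)} : accepted c₀ U ⊆ proposals c₀ U :=
  filter_subset _ _

lemma proposals_subset {U : Finset (β × γ)} : proposals c₀ U ⊆ U :=
  filter_subset _ _

lemma exists_mem_proposals_le {U : Finset (β × γ)} {e : β × γ} (he : e ∈ U) :
    ∃ f ∈ proposals c₀ U, f.1 = e.1 ∧ c₀ e ≤ c₀ f := by
  obtain ⟨f, hf, hmax⟩ := exists_max_image (U.filter (·.1 = e.1)) c₀ ⟨e, mem_filter.2 ⟨he, rfl⟩⟩
  obtain ⟨hfU, hfe⟩ := mem_filter.1 hf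
  refine ⟨f, mem_filter.2 ⟨hfU, fun g hg hgf => hmax g (mem_filter.2 ⟨hg, hgf.trans hfe⟩)⟩,
    hfe, hmax e (mem_filter.2 ⟨he, rfl⟩)⟩

lemma exists_mem_accepted_le {U : Finset (β × γ)} {e : β × γ} (he : e ∈ proposals c₀ U) :
    ∃ t ∈ accepted c₀ U, t.2 = e.2 ∧ c₀ t ≤ c₀ e := by
  obtain ⟨t, ht, hmin⟩ := exists_min_image ((proposals c₀ U).filter (·.2 = e.2)) c₀
    ⟨e, mem_filter.2 ⟨he, rfl⟩⟩
  obtain ⟨htP, hte⟩ := mem_filter.1 ht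
  refine ⟨t, mem_filter.2 ⟨htP, fun g hg hgt => hmin g (mem_filter.2 ⟨hg, hgt.trans hte⟩)⟩,
    hte, hmin e (mem_filter.2 ⟨he, rfl⟩)⟩

lemma isStableMatching_proposals {U : Finset (β × γ)} (hc₀ : IsProperOn U c₀)
    (h : proposals c₀ U ⊆ accepted c₀ U) : IsStableMatching c₀ U (proposals c₀ U) := by
  refine ⟨proposals_subset, fun e he f hf hef => ⟨fun h1 => ?_, fun h2 => ?_⟩, fun e he heP => ?_⟩
  · refine hc₀ e (proposals_subset he) f (proposals_subset hf) hef (Or.inl h1) (le_antisymm ?_ ?_)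
    · exact (mem_filter.1 hf).2 e (proposals_subset he) h1
    · exact (mem_filter.1 he).2 f (proposals_subset hf) h1.symm
  · refine hc₀ e (proposals_subset he) f (proposals_subset hf) hef (Or.inr h2) (le_antisymm ?_ ?_)
    · exact (mem_filter.1 (h he)).2 f hf h2.symm
    · exact (mem_filter.1 (h hf)).2 e he h2
  · obtain ⟨f, hf, hfe, hle⟩ := exists_mem_proposals_le (c₀ := c₀) he
    have hne : e ≠ f := fun h => heP (h ▸ hf)
    exact ⟨f, hf, Or.inl ⟨hfe, hle.lt_of_ne (hc₀ e he f (proposals_subset hf) hne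
      (Or.inl hfe.symm))⟩⟩

/-- Gale–Shapley: rejected proposals may be deleted. -/
lemma isStableMatching_of_sdiff_rejected {U K : Finset (β × γ)}
    (hK : IsStableMatching c₀ (U \ (proposals c₀ U \ accepted c₀ U)) K)
    (hKbest : ∀ e ∈ proposals c₀ (U \ (proposals c₀ U \ accepted c₀ U)),
      ∃ k ∈ K, k.2 = e.2 ∧ c₀ k ≤ c₀ e) :
    IsStableMatching c₀ U K ∧ ∀ e ∈ proposals c₀ U, ∃ k ∈ K, k.2 = e.2 ∧ c₀ k ≤ c₀ e := by
  set U' := U \ (proposals c₀ U \ accepted c₀ U)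
  have hacc : ∀ t ∈ accepted c₀ U, t ∈ proposals c₀ U' := fun t ht => by
    have htP := accepted_subset_proposals ht
    refine mem_filter.2 ⟨mem_sdiff.2 ⟨proposals_subset htP, fun h => (mem_sdiff.1 h).2 ht⟩,
      fun f hf => (mem_filter.1 htP).2 f (mem_sdiff.1 hf).1⟩
  have hbest : ∀ e ∈ proposals c₀ U, ∃ k ∈ K, k.2 = e.2 ∧ c₀ k ≤ c₀ e := fun e he => by
    obtain ⟨t, ht, hte, hle⟩ := exists_mem_accepted_le he
    obtain ⟨k, hk, hkt, hkle⟩ := hKbest t (hacc t ht)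
    exact ⟨k, hk, hkt.trans hte, hkle.trans hle⟩
  refine ⟨⟨hK.1.trans sdiff_subset, hK.2.1, fun e he heK => ?_⟩, hbest⟩
  by_cases hrej : e ∈ proposals c₀ U \ accepted c₀ U
  · obtain ⟨heP, heA⟩ := mem_sdiff.1 hrej
    obtain ⟨f, hfP, hfe, hlt⟩ : ∃ f ∈ proposals c₀ U, f.2 = e.2 ∧ c₀ f < c₀ e := by
      by_contra! h
      exact heA (mem_filter.2 ⟨heP, h⟩)
    obtain ⟨k, hk, hkf, hle⟩ := hbest f hfP
    exact ⟨k, hk, Or.inr ⟨hkf.trans hfe, hle.trans_lt hlt⟩⟩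
  · exact hK.2.2 e (mem_sdiff.2 ⟨he, hrej⟩) heK

lemma exists_isStableMatching_matched_le_proposals (U : Finset (β × γ)) (hc₀ : IsProperOn U c₀) :
    ∃ K, IsStableMatching c₀ U K ∧ ∀ e ∈ proposals c₀ U, ∃ k ∈ K, k.2 = e.2 ∧ c₀ k ≤ c₀ e := by
  induction U using Finset.strongInduction with
  | H U ih =>
  by_cases h : proposals c₀ U ⊆ accepted c₀ U
  · exact ⟨_, isStableMatching_proposals hc₀ h,
      fun e he => ⟨e, he, rfl, le_rfl⟩⟩
  · have hrej : (proposals c₀ U \ accepted c₀ U).Nonempty := by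
      simpa [sdiff_nonempty] using h
    obtain ⟨K, hK, hKbest⟩ := ih _ (sdiff_ssubset (sdiff_subset.trans proposals_subset) hrej)
      (hc₀.mono sdiff_subset)
    exact ⟨K, isStableMatching_of_sdiff_rejected hK hKbest⟩

theorem exists_isStableMatching (U : Finset (β × γ)) (hc₀ : IsProperOn U c₀) :
    ∃ K, IsStableMatching c₀ U K :=
  (exists_isStableMatching_matched_le_proposals U hc₀).imp fun _ => And.left

end StableMatching

section ListColoring

variable {c₀ : β × γ → ℕ}

noncomputable def absorbers (c₀ : β × γ → ℕ) (E : Finset (β × γ)) (e : β × γ) :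
    Finset (β × γ) :=
  E.filter fun f => Absorbs c₀ f e

/-- The absorbers at the `β`-end of `e` have larger, those at the `γ`-end smaller colours. -/
lemma card_absorbers_lt {E : Finset (β × γ)} {n : ℕ} (hc₀ : IsProperOn E c₀)
    (hlt : ∀ e ∈ E, c₀ e < n) {e : β × γ} (he : e ∈ E) : #(absorbers c₀ E e) < n := by
  set A := E.filter fun f => f.1 = e.1 ∧ c₀ e < c₀ f
  set B := E.filter fun f => f.2 = e.2 ∧ c₀ f < c₀ e
  have hA : #A ≤ #(Ioo (c₀ e) n) := card_le_card_of_injOn c₀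
    (fun f hf => by
      obtain ⟨hfE, -, hlt'⟩ := mem_filter.1 hf
      exact mem_Ioo.2 ⟨hlt', hlt f hfE⟩)
    (fun f hf g hg hfg => by
      obtain ⟨hfE, hfe, -⟩ := mem_filter.1 hf
      obtain ⟨hgE, hge, -⟩ := mem_filter.1 hg
      by_contra hne
      exact hc₀ f hfE g hgE hne (Or.inl (hfe.trans hge.symm)) hfg)
  have hB : #B ≤ #(range (c₀ e)) := card_le_card_of_injOn c₀
    (fun f hf => mem_range.2 (mem_filter.1 hf).2.2)
    (fun f hf g hg hfg => by
      obtain ⟨hfE, hfe, -⟩ := mem_filter.1 hf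
      obtain ⟨hgE, hge, -⟩ := mem_filter.1 hg
      by_contra hne
      exact hc₀ f hfE g hgE hne (Or.inr (hfe.trans hge.symm)) hfg)
  have hsub : absorbers c₀ E e ⊆ A ∪ B := fun f hf => by
    obtain ⟨hfE, h | h⟩ := mem_filter.1 hf
    · exact mem_union_left _ (mem_filter.2 ⟨hfE, h⟩)
    · exact mem_union_right _ (mem_filter.2 ⟨hfE, h⟩)
  have := hlt e he
  have := (card_le_card hsub).trans (card_union_le A B)
  rw [Nat.card_Ioo] at hA
  rw [card_range] at hB
  omega

/-- An edge that loses the colour `x` from its list also loses an absorber in `K`. -/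
lemma card_absorbers_sdiff_lt_card_erase {E K : Finset (β × γ)} {L : β × γ → Finset κ} {x : κ}
    (hKE : K ⊆ E) (hKabs : ∀ e ∈ E.filter (x ∈ L ·), e ∉ K → ∃ f ∈ K, Absorbs c₀ f e)
    (hL : ∀ e ∈ E, #(absorbers c₀ E e) < #(L e)) {g : β × γ} (hg : g ∈ E \ K) :
    #(absorbers c₀ (E \ K) g) < #((L g).erase x) := by
  obtain ⟨hgE, hgK⟩ := mem_sdiff.1 hg
  have hsub : absorbers c₀ (E \ K) g ⊆ absorbers c₀ E g := filter_subset_filter _ sdiff_subset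
  by_cases hxg : x ∈ L g
  · obtain ⟨k, hk, hkg⟩ := hKabs g (mem_filter.2 ⟨hgE, hxg⟩) hgK
    have hkmem : k ∈ absorbers c₀ E g := mem_filter.2 ⟨hKE hk, hkg⟩
    have hsub' : absorbers c₀ (E \ K) g ⊆ (absorbers c₀ E g).erase k := fun f hf =>
      mem_erase.2 ⟨fun hfk => (mem_sdiff.1 (mem_filter.1 hf).1).2 (hfk ▸ hk), hsub hf⟩
    have h₁ := card_le_card hsub'
    have h₂ := hL g hgE
    have h₃ := card_pos.2 ⟨k, hkmem⟩
    rw [card_erase_of_mem hkmem] at h₁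
    rw [card_erase_of_mem hxg]
    omega
  · rw [erase_eq_of_notMem hxg]
    exact (card_le_card hsub).trans_lt (hL g hgE)

/-- Colour a kernel of the edges that may take colour `x` with `x` and recurse. -/
theorem exists_list_coloring_of_card_absorbers_lt [Nonempty κ] (E : Finset (β × γ))
    (hc₀ : IsProperOn E c₀) (L : β × γ → Finset κ)
    (hL : ∀ e ∈ E, #(absorbers c₀ E e) < #(L e)) :
    ∃ c : β × γ → κ, (∀ e ∈ E, c e ∈ L e) ∧ IsProperOn E c := by
  induction E using Finset.strongInduction generalizing L with
  | H E ih =>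
  rcases E.eq_empty_or_nonempty with rfl | ⟨e, he⟩
  · exact ⟨fun _ => Classical.arbitrary κ, by simp, by simp [IsProperOn]⟩
  obtain ⟨x, hx⟩ := card_pos.1 ((Nat.zero_le _).trans_lt (hL e he))
  set U := E.filter (x ∈ L ·)
  obtain ⟨K, hKU, hK, hKabs⟩ := exists_isStableMatching U (hc₀.mono (filter_subset _ E))
  have hKE : K ⊆ E := hKU.trans (filter_subset _ E)
  have hKne : K.Nonempty := by
    by_contra hempty
    obtain ⟨f, hf, -⟩ := hKabs e (mem_filter.2 ⟨he, hx⟩) (fun h => hempty ⟨e, h⟩)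
    exact hempty ⟨f, hf⟩
  obtain ⟨c, hcL, hc⟩ := ih (E \ K) (sdiff_ssubset hKE hKne) (hc₀.mono sdiff_subset) _
    fun g hg => card_absorbers_sdiff_lt_card_erase hKE hKabs hL hg
  have hcx : ∀ g ∈ E, g ∉ K → c g ≠ x := fun g hg hgK =>
    (mem_erase.1 (hcL g (mem_sdiff.2 ⟨hg, hgK⟩))).1
  refine ⟨fun g => if g ∈ K then x else c g, fun g hg => ?_, fun g hg f hf hgf hmeet => ?_⟩
  · by_cases hgK : g ∈ K
    · simpa [hgK] using (mem_filter.1 (hKU hgK)).2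
    · simpa [hgK] using mem_of_mem_erase (hcL g (mem_sdiff.2 ⟨hg, hgK⟩))
  · by_cases hgK : g ∈ K <;> by_cases hfK : f ∈ K <;> simp only [hgK, hfK, if_true, if_false]
    · exact absurd hmeet (not_or.2 (hK g hgK f hfK hgf))
    · exact (hcx f hf hfK).symm
    · exact hcx g hg hgK
    · exact hc g (mem_sdiff.2 ⟨hg, hgK⟩) f (mem_sdiff.2 ⟨hf, hfK⟩) hgf hmeet

end ListColoring

/-- Galvin's theorem. -/
theorem exists_list_coloring [Nonempty κ] (n : ℕ) (E : Finset (β × γ))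
    (h₁ : ∀ x, #(E.filter (·.1 = x)) ≤ n) (h₂ : ∀ y, #(E.filter (·.2 = y)) ≤ n)
    (L : β × γ → Finset κ) (hL : ∀ e ∈ E, n ≤ #(L e)) :
    ∃ c : β × γ → κ, (∀ e ∈ E, c e ∈ L e) ∧ IsProperOn E c := by
  obtain ⟨c₀, hlt, hc₀⟩ := exists_proper_coloring n E h₁ h₂
  exact exists_list_coloring_of_card_absorbers_lt E hc₀ L fun e he =>
    (card_absorbers_lt hc₀ hlt he).trans_le (hL e he)

end Bipartite

namespace Sym2

variable {α : Type*}

noncomputable def orient (s : Set α) (g : Sym2 α) : α × α :=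
  if g.out.1 ∈ s then g.out else g.out.swap

lemma mk_orient (s : Set α) (g : Sym2 α) : s((orient s g).1, (orient s g).2) = g := by
  unfold orient
  split_ifs
  · exact Quot.out_eq g
  · rw [Prod.fst_swap, Prod.snd_swap, eq_swap]
    exact Quot.out_eq g

lemma orient_fst_mem (s : Set α) (g : Sym2 α) : (orient s g).1 ∈ g := by
  have := mem_mk_left (orient s g).1 (orient s g).2
  rwa [mk_orient] at this

lemma orient_snd_mem (s : Set α) (g : Sym2 α) : (orient s g).2 ∈ g := by
  have := mem_mk_right (orient s g).1 (orient s g).2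
  rwa [mk_orient] at this

end Sym2

namespace SimpleGraph

variable {α κ : Type*} {G : SimpleGraph α} {s t : Set α}

lemma card_filter_mem_edgeFinset_le [Fintype α] (G : SimpleGraph α) (v : α) :
    #(G.edgeFinset.filter (v ∈ ·)) ≤ G.maxDegree := by
  rw [← incidenceFinset_eq_filter, card_incidenceFinset_eq_degree]
  exact G.degree_le_maxDegree v

lemma eq_or_adj_of_mem_edgeSet {g : Sym2 α} (hg : g ∈ G.edgeSet) {x y : α}
    (hx : x ∈ g) (hy : y ∈ g) : x = y ∨ G.Adj x y := by
  induction g using Sym2.ind with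
  | h a b =>
  rw [mem_edgeSet] at hg
  rcases Sym2.mem_iff.1 hx with rfl | rfl <;> rcases Sym2.mem_iff.1 hy with rfl | rfl
  exacts [Or.inl rfl, Or.inr hg, Or.inr hg.symm, Or.inl rfl]

open Sym2 in
lemma IsBipartiteWith.orient_mem (h : G.IsBipartiteWith s t) {g : Sym2 α} (hg : g ∈ G.edgeSet) :
    (orient s g).1 ∈ s ∧ (orient s g).2 ∉ s := by
  have hadj : G.Adj g.out.1 g.out.2 := by
    rw [← mem_edgeSet, show s(g.out.1, g.out.2) = g from Quot.out_eq g]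
    exact hg
  have hts : ∀ x ∈ t, x ∉ s := fun x hx hs => Set.disjoint_left.1 h.disjoint hs hx
  unfold orient
  rcases h.mem_of_adj hadj with ⟨h1, h2⟩ | ⟨h1, h2⟩
  · rw [if_pos h1]
    exact ⟨h1, hts _ h2⟩
  · rw [if_neg (hts _ h1)]
    exact ⟨h2, hts _ h1⟩

open Sym2 in
lemma IsBipartiteWith.exists_mem_mem_iff (h : G.IsBipartiteWith s t) {g g' : Sym2 α}
    (hg : g ∈ G.edgeSet) (hg' : g' ∈ G.edgeSet) :
    (∃ x, x ∈ g ∧ x ∈ g') ↔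
      (orient s g).1 = (orient s g').1 ∨ (orient s g).2 = (orient s g').2 := by
  have ends : ∀ {e : Sym2 α}, e ∈ G.edgeSet → ∀ x ∈ e,
      (x ∈ s → x = (orient s e).1) ∧ (x ∉ s → x = (orient s e).2) := fun {e} hg x hx => by
    rw [← mk_orient s e, Sym2.mem_iff] at hx
    obtain ⟨h1, h2⟩ := h.orient_mem hg
    rcases hx with rfl | rfl
    · exact ⟨fun _ => rfl, fun hs => absurd h1 hs⟩
    · exact ⟨fun hs => absurd hs h2, fun _ => rfl⟩
  constructor
  · rintro ⟨x, hx, hx'⟩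
    by_cases hs : x ∈ s
    · exact Or.inl (((ends hg x hx).1 hs).symm.trans ((ends hg' x hx').1 hs))
    · exact Or.inr (((ends hg x hx).2 hs).symm.trans ((ends hg' x hx').2 hs))
  · rintro (h1 | h2)
    · exact ⟨_, orient_fst_mem s g, h1 ▸ orient_fst_mem s g'⟩
    · exact ⟨_, orient_snd_mem s g, h2 ▸ orient_snd_mem s g'⟩

theorem IsBipartite.exists_list_edge_coloring [Nonempty κ] (hG : G.IsBipartite)
    (F : Finset (Sym2 α)) (hF : ∀ g ∈ F, g ∈ G.edgeSet) (n : ℕ)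
    (hdeg : ∀ x, #(F.filter (x ∈ ·)) ≤ n) (L : Sym2 α → Finset κ) (hL : ∀ g ∈ F, n ≤ #(L g)) :
    ∃ c : Sym2 α → κ, (∀ g ∈ F, c g ∈ L g) ∧
      ∀ g ∈ F, ∀ g' ∈ F, g ≠ g' → (∃ x, x ∈ g ∧ x ∈ g') → c g ≠ c g' := by
  obtain ⟨s, t, hst⟩ := hG.exists_isBipartiteWith
  have hdeg' : ∀ (p : α × α → Prop) [DecidablePred p] (x : α),
      (∀ g, p (Sym2.orient s g) → x ∈ g) → #((F.image (Sym2.orient s)).filter p) ≤ n :=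
    fun p _ x hpx => by
      rw [filter_image]
      exact card_image_le.trans ((card_le_card fun g hg =>
        mem_filter.2 ⟨(mem_filter.1 hg).1, hpx g (mem_filter.1 hg).2⟩).trans (hdeg x))
  obtain ⟨c, hcL, hc⟩ := Bipartite.exists_list_coloring n (F.image (Sym2.orient s))
    (fun x => hdeg' _ x fun g hg => hg ▸ Sym2.orient_fst_mem s g)
    (fun y => hdeg' _ y fun g hg => hg ▸ Sym2.orient_snd_mem s g)
    (fun p => L s(p.1, p.2))
    (fun p hp => by
      obtain ⟨g, hg, rfl⟩ := mem_image.1 hp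
      rw [Sym2.mk_orient]
      exact hL g hg)
  refine ⟨fun g => c (Sym2.orient s g), fun g hg => ?_, fun g hg g' hg' hne hmeet => ?_⟩
  · simpa only [Sym2.mk_orient] using hcL _ (mem_image_of_mem _ hg)
  · refine hc _ (mem_image_of_mem _ hg) _ (mem_image_of_mem _ hg') (fun h => hne ?_)
      ((hst.exists_mem_mem_iff (hF g hg) (hF g' hg')).1 hmeet)
    rw [← Sym2.mk_orient s g, h, Sym2.mk_orient]

end SimpleGraph

section Precoloring

variable {α β κ : Type*}

def Touches (f : Sym2 (α × β)) (g : Sym2 α) : Prop := ∃ x ∈ f, x.1 ∈ g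

lemma touches_of_map_fst_eq {f : Sym2 (α × β)} {g h : Sym2 α} (hfg : f.map Prod.fst = g)
    {v : α} (hvg : v ∈ g) (hvh : v ∈ h) : Touches f h := by
  obtain ⟨x, hx, rfl⟩ := Sym2.mem_map.1 (hfg ▸ hvg)
  exact ⟨x, hx, hvh⟩

lemma touches_of_map_fst_eq_self {f : Sym2 (α × β)} {g : Sym2 α} (hfg : f.map Prod.fst = g) :
    Touches f g :=
  touches_of_map_fst_eq hfg (Sym2.out_fst_mem g) (Sym2.out_fst_mem g)

noncomputable def allowedColors [Fintype κ] (E₀ : Set (Sym2 (α × β))) (φ : Sym2 (α × β) → κ)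
    (g : Sym2 α) : Finset κ :=
  univ.filter fun x => ∀ f ∈ E₀, Touches f g → φ f ≠ x

lemma card_allowedColors [Fintype κ] [Nonempty κ] {E₀ : Set (Sym2 (α × β))}
    {φ : Sym2 (α × β) → κ} {g : Sym2 α}
    (hT : ∀ f ∈ E₀, ∀ f' ∈ E₀, Touches f g → Touches f' g → f = f') :
    Fintype.card κ - 1 ≤ #(allowedColors E₀ φ g) := by
  obtain ⟨y, hy⟩ : ∃ y, ∀ f ∈ E₀, Touches f g → φ f = y := by
    by_cases h : ∃ f ∈ E₀, Touches f g
    · obtain ⟨f, hf, hfg⟩ := h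
      exact ⟨φ f, fun f' hf' hf'g => congrArg φ (hT f' hf' f hf hf'g hfg)⟩
    · push Not at h
      exact ⟨Classical.arbitrary κ, fun f hf hfg => absurd hfg (h f hf)⟩
  calc Fintype.card κ - 1 = #(univ.erase y) := by rw [card_erase_of_mem (mem_univ y), card_univ]
    _ ≤ _ := card_le_card fun x hx =>
      mem_filter.2 ⟨mem_univ x, fun f hf hfg => (hy f hf hfg).symm ▸ (ne_of_mem_erase hx).symm⟩

/-- An edge of `G` lying under a precoloured edge `f` has colour `φ f`, which the compatibility
condition forbids on every other edge touched by `f`. -/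
lemma isProperEdgeColoring_of_compatible {G : SimpleGraph α} {E₀ : Set (Sym2 (α × β))} {n : ℕ}
    {φ : Sym2 (α × β) → Fin n} {c : Sym2 α → Fin n}
    (hc : ∀ g ∈ G.edgeSet, ∀ f ∈ E₀, Touches f g → (c g = φ f ↔ f.map Prod.fst = g))
    (hfree : ∀ g ∈ G.edgeSet, ∀ g' ∈ G.edgeSet, g ≠ g' → (∃ v, v ∈ g ∧ v ∈ g') →
      (∀ f ∈ E₀, f.map Prod.fst ≠ g) → (∀ f ∈ E₀, f.map Prod.fst ≠ g') → c g ≠ c g') :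
    IsProperEdgeColoring G c := by
  have under : ∀ {g g'}, g ∈ G.edgeSet → g' ∈ G.edgeSet → g ≠ g' → ∀ v ∈ g, v ∈ g' →
      ∀ f ∈ E₀, f.map Prod.fst = g → c g ≠ c g' := fun hg hg' hne v hvg hvg' f hf hfg => by
    rw [(hc _ hg f hf (touches_of_map_fst_eq_self hfg)).2 hfg]
    exact fun e => hne (hfg.symm.trans
      ((hc _ hg' f hf (touches_of_map_fst_eq hfg hvg hvg')).1 e.symm))
  intro g hg g' hg' hne ⟨v, hvg, hvg'⟩
  by_cases h : ∃ f ∈ E₀, f.map Prod.fst = g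
  · obtain ⟨f, hf, hfg⟩ := h
    exact under hg hg' hne v hvg hvg' f hf hfg
  by_cases h' : ∃ f ∈ E₀, f.map Prod.fst = g'
  · obtain ⟨f, hf, hfg'⟩ := h'
    exact (under hg' hg hne.symm v hvg' hvg f hf hfg').symm
  push Not at h h'
  exact hfree g hg g' hg' hne ⟨v, hvg, hvg'⟩ h h'

theorem exists_edgeColoring_compatible [Fintype α] (G : SimpleGraph α) (hG : G.IsBipartite)
    (E₀ : Set (Sym2 (α × β))) (φ : Sym2 (α × β) → Fin (G.maxDegree + 1))
    (hT : ∀ g ∈ G.edgeSet, ∀ f ∈ E₀, ∀ f' ∈ E₀, Touches f g → Touches f' g → f = f') :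
    ∃ c : Sym2 α → Fin (G.maxDegree + 1), IsProperEdgeColoring G c ∧
      ∀ g ∈ G.edgeSet, ∀ f ∈ E₀, Touches f g → (c g = φ f ↔ f.map Prod.fst = g) := by
  set F := G.edgeFinset.filter fun g => ∀ f ∈ E₀, f.map Prod.fst ≠ g
  have hF : ∀ {g}, g ∈ G.edgeSet → (∀ f ∈ E₀, f.map Prod.fst ≠ g) → g ∈ F :=
    fun hg h => mem_filter.2 ⟨mem_edgeFinset.2 hg, h⟩
  obtain ⟨c₁, hc₁L, hc₁⟩ := hG.exists_list_edge_coloring F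
    (fun g hg => mem_edgeFinset.1 (mem_filter.1 hg).1) G.maxDegree
    (fun v => (card_le_card (filter_subset_filter _ (filter_subset _ _))).trans
      (G.card_filter_mem_edgeFinset_le v))
    (allowedColors E₀ φ)
    (fun g hg => by
      simpa using card_allowedColors (φ := φ) (hT g (mem_edgeFinset.1 (mem_filter.1 hg).1)))
  set c : Sym2 α → Fin (G.maxDegree + 1) := fun g =>
    if h : ∃ f ∈ E₀, f.map Prod.fst = g then φ h.choose else c₁ g
  have hc : ∀ g ∈ G.edgeSet, ∀ f ∈ E₀, Touches f g → (c g = φ f ↔ f.map Prod.fst = g) := by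
    intro g hg f hf hfg
    by_cases h : ∃ f ∈ E₀, f.map Prod.fst = g
    · obtain ⟨hf₀, hf₀g⟩ := h.choose_spec
      have hff₀ := hT g hg f hf _ hf₀ hfg (touches_of_map_fst_eq_self hf₀g)
      simp only [c, dif_pos h, ← hff₀, true_iff]
      exact hff₀ ▸ hf₀g
    · have hgF := hF hg fun f hf e => h ⟨f, hf, e⟩
      simp only [c, dif_neg h]
      exact iff_of_false (fun e => (mem_filter.1 (hc₁L g hgF)).2 f hf hfg e.symm)
        fun e => h ⟨f, hf, e⟩
  refine ⟨c, isProperEdgeColoring_of_compatible hc fun g hg g' hg' hne hmeet h h' => ?_, hc⟩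
  have h₁ : ¬ ∃ f ∈ E₀, f.map Prod.fst = g := fun ⟨f, hf, e⟩ => h f hf e
  have h₂ : ¬ ∃ f ∈ E₀, f.map Prod.fst = g' := fun ⟨f, hf, e⟩ => h' f hf e
  simp only [c, dif_neg h₁, dif_neg h₂]
  exact hc₁ g (hF hg h) g' (hF hg' h') hne hmeet

end Precoloring

section BoxProdEdge

variable {α β κ : Type*} {G : SimpleGraph α}

lemma edist_boxProd_top_le_two {x y : α × β} (h : x.1 = y.1 ∨ G.Adj x.1 y.1) :
    (G □ (⊤ : SimpleGraph β)).edist x y ≤ 2 := by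
  have h₁ : G.edist x.1 y.1 ≤ 1 := by
    rcases h with h | h
    · simp [h]
    · exact (edist_eq_one_iff_adj.2 h).le
  have h₂ : (⊤ : SimpleGraph β).edist x.2 y.2 ≤ 1 := by
    rcases eq_or_ne x.2 y.2 with h | h
    · simp [h]
    · exact (edist_top_of_ne h).le
  rw [edist_boxProd]
  calc G.edist x.1 y.1 + (⊤ : SimpleGraph β).edist x.2 y.2 ≤ 1 + 1 := add_le_add h₁ h₂
    _ = 2 := by norm_num

/-- Two vertices over the same edge of `G` are at distance at most `2` in `G □ Kₙ`. -/
lemma eq_of_touches_of_edgeDistGE {E₀ : Set (Sym2 (α × β))}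
    (hdist : ∀ e ∈ E₀, ∀ f ∈ E₀, e ≠ f → EdgeDistGE (G □ (⊤ : SimpleGraph β)) e f 3) :
    ∀ g ∈ G.edgeSet, ∀ f ∈ E₀, ∀ f' ∈ E₀, Touches f g → Touches f' g → f = f' := by
  rintro g hg f hf f' hf' ⟨x, hxf, hxg⟩ ⟨y, hyf', hyg⟩
  by_contra hne
  have := (hdist f hf f' hf' hne x hxf y hyf').trans
    (edist_boxProd_top_le_two (G.eq_or_adj_of_mem_edgeSet hg hxg hyg))
  norm_num at this

noncomputable def liftColoring (c : Sym2 α → κ) (t : α → κ) : Sym2 (α × β) → κ :=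
  Sym2.lift ⟨fun x y => if x.1 = y.1 then t x.1 else c s(x.1, y.1), fun x y => by
    by_cases h : x.1 = y.1
    · simp [h]
    · simp [h, Ne.symm h, Sym2.eq_swap]⟩

lemma liftColoring_of_ne (c : Sym2 α → κ) (t : α → κ) {u v : α} (huv : u ≠ v) (i j : β) :
    liftColoring c t s((u, i), (v, j)) = c s(u, v) := by
  simp [liftColoring, huv]

lemma liftColoring_self (c : Sym2 α → κ) (t : α → κ) (z : α) (i j : β) :
    liftColoring c t s((z, i), (z, j)) = t z := by
  simp [liftColoring]

def rung (z : α) : Sym2 (α × Fin 2) := s((z, 0), (z, 1))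

lemma eq_or_eq_rung_of_mem_edgeSet {e : Sym2 (α × Fin 2)}
    (he : e ∈ (G □ (⊤ : SimpleGraph (Fin 2))).edgeSet) {w : α × Fin 2} (hw : w ∈ e) :
    (∃ y, G.Adj w.1 y ∧ e = s(w, (y, w.2))) ∨ e = rung w.1 := by
  obtain ⟨w', rfl⟩ := Sym2.mem_iff_exists.1 hw
  rw [mem_edgeSet, boxProd_adj] at he
  obtain ⟨w₁, w₂⟩ := w
  obtain ⟨w₁', w₂'⟩ := w'
  rcases he with ⟨hadj, h₂⟩ | ⟨hne, h₁⟩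
  · exact Or.inl ⟨w₁', hadj, by simp_all⟩
  · right
    simp only at h₁ hne
    subst h₁
    rw [top_adj] at hne
    fin_cases w₂ <;> fin_cases w₂' <;> simp_all [rung, Sym2.eq_swap]

theorem isProperEdgeColoring_liftColoring {n : ℕ} {c : Sym2 α → Fin n} {t : α → Fin n}
    (hc : IsProperEdgeColoring G c) (ht : ∀ g ∈ G.edgeSet, ∀ z ∈ g, c g ≠ t z) :
    IsProperEdgeColoring (G □ (⊤ : SimpleGraph (Fin 2))) (liftColoring c t) := by
  rintro e he f hf hef ⟨w, hwe, hwf⟩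
  rcases eq_or_eq_rung_of_mem_edgeSet he hwe with ⟨y, hy, rfl⟩ | rfl <;>
    rcases eq_or_eq_rung_of_mem_edgeSet hf hwf with ⟨y', hy', rfl⟩ | rfl
  · rw [liftColoring_of_ne c t hy.ne, liftColoring_of_ne c t hy'.ne]
    refine hc _ hy _ hy' (fun h => hef ?_) ⟨w.1, Sym2.mem_mk_left _ _, Sym2.mem_mk_left _ _⟩
    rw [Sym2.congr_right.1 h]
  · rw [liftColoring_of_ne c t hy.ne, rung, liftColoring_self]
    exact ht _ hy w.1 (Sym2.mem_mk_left _ _)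
  · rw [liftColoring_of_ne c t hy'.ne, rung, liftColoring_self]
    exact (ht _ hy' w.1 (Sym2.mem_mk_left _ _)).symm
  · exact absurd rfl hef

lemma liftColoring_eq_of_mem {E₀ : Set (Sym2 (α × Fin 2))} {n : ℕ}
    {φ : Sym2 (α × Fin 2) → Fin n} {c : Sym2 α → Fin n} {t : α → Fin n}
    (hE₀ : E₀ ⊆ (G □ (⊤ : SimpleGraph (Fin 2))).edgeSet)
    (hc : ∀ g ∈ G.edgeSet, ∀ f ∈ E₀, Touches f g → (c g = φ f ↔ f.map Prod.fst = g))
    (ht : ∀ z, rung z ∈ E₀ → t z = φ (rung z)) {e : Sym2 (α × Fin 2)} (he : e ∈ E₀) :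
    liftColoring c t e = φ e := by
  obtain ⟨⟨z, i⟩, hw⟩ : ∃ w, w ∈ e := ⟨_, Sym2.out_fst_mem e⟩
  rcases eq_or_eq_rung_of_mem_edgeSet (hE₀ he) hw with ⟨y, hy, rfl⟩ | rfl
  · rw [liftColoring_of_ne c t hy.ne]
    exact (hc _ hy _ he ⟨_, Sym2.mem_mk_left _ _, Sym2.mem_mk_left _ _⟩).2 rfl
  · rw [rung, liftColoring_self]
    exact ht z he

lemma exists_rung_coloring [Fintype α] {E₀ : Set (Sym2 (α × Fin 2))}
    {φ : Sym2 (α × Fin 2) → Fin (G.maxDegree + 1)} {c : Sym2 α → Fin (G.maxDegree + 1)}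
    (hc : ∀ g ∈ G.edgeSet, ∀ f ∈ E₀, Touches f g → (c g = φ f ↔ f.map Prod.fst = g)) :
    ∃ t : α → Fin (G.maxDegree + 1),
      (∀ g ∈ G.edgeSet, ∀ z ∈ g, c g ≠ t z) ∧ ∀ z, rung z ∈ E₀ → t z = φ (rung z) := by
  have : ∀ z, ∃ x, (∀ g ∈ G.edgeSet, z ∈ g → c g ≠ x) ∧ (rung z ∈ E₀ → x = φ (rung z)) := by
    intro z
    by_cases hz : rung z ∈ E₀
    · refine ⟨φ (rung z), fun g hg hzg e => G.not_isDiag_of_mem_edgeSet hg ?_, fun _ => rfl⟩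
      rw [← (hc g hg _ hz ⟨(z, 0), Sym2.mem_mk_left _ _, hzg⟩).1 e]
      simp [rung]
    · have hcard : #((G.edgeFinset.filter (z ∈ ·)).image c) <
          #(univ : Finset (Fin (G.maxDegree + 1))) := by
        rw [card_univ, Fintype.card_fin, Nat.lt_succ_iff]
        exact card_image_le.trans (G.card_filter_mem_edgeFinset_le z)
      obtain ⟨x, -, hx⟩ := exists_mem_notMem_of_card_lt_card hcard
      exact ⟨x, fun g hg hzg e =>
        hx (mem_image.2 ⟨g, mem_filter.2 ⟨mem_edgeFinset.2 hg, hzg⟩, e⟩), fun h => absurd h hz⟩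
  choose t ht using this
  exact ⟨t, fun g hg z hzg => (ht z).1 g hg hzg, fun z => (ht z).2⟩

end BoxProdEdge

theorem extend_distance3_bipartite_times_edge_general {α : Type*} [Fintype α]
    (G : SimpleGraph α) (hbip : G.Colorable 2)
    (E₀ : Set (Sym2 (α × Fin 2)))
    (φ : Sym2 (α × Fin 2) → Fin (G.maxDegree + 1))
    (hφ : IsProperEdgeColoringOn (G □ (⊤ : SimpleGraph (Fin 2))) E₀ φ)
    (hdist : ∀ e ∈ E₀, ∀ f ∈ E₀, e ≠ f →
      EdgeDistGE (G □ (⊤ : SimpleGraph (Fin 2))) e f 3) :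
    ∃ c : Sym2 (α × Fin 2) → Fin (G.maxDegree + 1),
      IsProperEdgeColoring (G □ (⊤ : SimpleGraph (Fin 2))) c ∧ ∀ e ∈ E₀, c e = φ e := by
  obtain ⟨c, hc, hcφ⟩ :=
    exists_edgeColoring_compatible G hbip E₀ φ (eq_of_touches_of_edgeDistGE hdist)
  obtain ⟨t, ht, htφ⟩ := exists_rung_coloring hcφ
  exact ⟨liftColoring c t, isProperEdgeColoring_liftColoring hc ht,
    fun e he => liftColoring_eq_of_mem hφ.1 hcφ htφ he⟩

/-- A distance-3 precoloring of `G □ K₂` (`G` bipartite, `Δ(G) ≥ 1`) with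
at most `Δ(G) + 1` colors is extendable to a proper `(Δ(G)+1)`-edge coloring. -/
theorem extend_distance3_bipartite_times_edge {α : Type*} [Fintype α]
    (G : SimpleGraph α) (hbip : G.Colorable 2) (hΔ : 1 ≤ G.maxDegree)
    (E₀ : Set (Sym2 (α × Fin 2)))
    (φ : Sym2 (α × Fin 2) → Fin (G.maxDegree + 1))
    (hφ : IsProperEdgeColoringOn (G □ (⊤ : SimpleGraph (Fin 2))) E₀ φ)
    (hdist : ∀ e ∈ E₀, ∀ f ∈ E₀, e ≠ f →
      EdgeDistGE (G □ (⊤ : SimpleGraph (Fin 2))) e f 3) :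
    ∃ c : Sym2 (α × Fin 2) → Fin (G.maxDegree + 1),
      IsProperEdgeColoring (G □ (⊤ : SimpleGraph (Fin 2))) c ∧ ∀ e ∈ E₀, c e = φ e :=
  extend_distance3_bipartite_times_edge_general G hbip E₀ φ hφ hdist
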